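/- arXiv:1103.2160 — 2 statements merged into one kernel-verified Lean document; each statement's English description precedes it below -/
import Mathlib

section
/- Let G be a group, let A be a commutative ring equipped with an action of G by ring automorphisms, and let M be an A-module equipped with an action of G by additive automorphisms satisfying the compatibility g • (x • m) = (g • x) • (g • m) for all g ∈ G, x ∈ A, m ∈ M. Suppose b : G → M is an A-basis of M and a : G → A is a function such that g • b(1) = a(g) • b(g) for every g ∈ G (where 1 is the identity of G). Then a(g) is a unit of A for every g ∈ G. -/
/-!
Apply `g⁻¹` to `g • b 1 = a g • b g`: by compatibility, `b 1 = (g⁻¹ • a g) • (g⁻¹ • b g)`.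
Reading off the `1`-coordinate gives `1 = (g⁻¹ • a g) * c`, so `g⁻¹ • a g` is a unit, and hence
so is its image `a g` under the ring automorphism `g`.
-/

theorem Module.Basis.isUnit_of_eq_smul {ι R M : Type*} [CommSemiring R] [AddCommMonoid M]
    [Module R M] (b : Module.Basis ι R M) {i : ι} {x : R} {m : M} (h : b i = x • m) :
    IsUnit x :=
  .of_mul_eq_one (b.repr m i) <| by
    simpa using (congrArg (fun v => b.repr v i) h).symm

theorem isUnit_smul_iff_of_mulDistribMulAction {G R : Type*} [Group G] [Monoid R]
    [MulDistribMulAction G R] (g : G) (x : R) : IsUnit (g • x) ↔ IsUnit x :=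
  MulEquiv.isUnit_map (MulDistribMulAction.toMulEquiv R g)

/-- In a `G`-equivariant `A`-module with `A`-basis `b` indexed by `G` satisfying
`g • b 1 = a g • b g`, each coefficient `a g` is a unit of `A`. -/
theorem stmt_3 (G : Type*) [Group G] (A : Type*) [CommRing A] [MulSemiringAction G A]
    (M : Type*) [AddCommGroup M] [Module A M] [DistribMulAction G M]
    (compat : ∀ (g : G) (x : A) (m : M), g • (x • m) = (g • x) • (g • m))
    (b : Module.Basis G A M) (a : G → A)
    (hb : ∀ g : G, g • b (1 : G) = a g • b g) :
    ∀ g : G, IsUnit (a g) := by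
  intro g
  have hb₁ : b 1 = (g⁻¹ • a g) • (g⁻¹ • b g) := by
    rw [← compat, ← hb, inv_smul_smul]
  rw [← isUnit_smul_iff_of_mulDistribMulAction g⁻¹]
  exact b.isUnit_of_eq_smul hb₁
end

section
/- Let G be a group, let A be a commutative ring equipped with an action of G by ring automorphisms, and let M be an A-module equipped with an action of G by additive automorphisms satisfying g • (x • m) = (g • x) • (g • m) for all g ∈ G, x ∈ A, m ∈ M. Suppose M admits an A-basis b : G → M indexed by G together with a function a : G → A such that g • b(1) = a(g) • b(g) for every g ∈ G. Then M admits an A-basis c : G → M satisfying g • c(h) = c(g·h) for all g, h ∈ G; consequently the A-linear isomorphism (G →₀ A) → M determined by sending the standard basis vector at h to c(h) intertwines the G-action on finitely supported functions G →₀ A given by (g • f)(h) = g • (f(g⁻¹·h)) with the G-action on M. -/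
/-!
Transporting `b 1` by the group gives the candidate basis `c h := h • b 1 = a h • b h`, which
is equivariant by construction. It is a basis because each `a g` is a unit: acting by `g⁻¹`
on `g • b 1 = a g • b g` writes the basis vector `b 1` as a multiple of `g⁻¹ • a g`, and the
`1`-coordinate of that identity exhibits an inverse.
-/

namespace Module.Basis

theorem isUnit_of_smul_eq {ι R M : Type*} [CommSemiring R] [AddCommMonoid M] [Module R M]
    (b : Basis ι R M) {x : R} {m : M} {i : ι} (h : x • m = b i) : IsUnit x :=
  .of_mul_eq_one (b.repr m i) <| by
    simpa using congrArg (fun v => b.repr v i) h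

theorem repr_symm_mapDomain_smul {G ι A M : Type*} [Group G] [MulAction G ι] [CommRing A]
    [MulSemiringAction G A] [AddCommGroup M] [Module A M] [DistribMulAction G M]
    (compat : ∀ (g : G) (x : A) (m : M), g • (x • m) = (g • x) • (g • m))
    (c : Basis ι A M) (hc : ∀ (g : G) (i : ι), g • c i = c (g • i)) (g : G) (f : ι →₀ A) :
    c.repr.symm (Finsupp.mapDomain (g • ·) (f.mapRange (g • ·) (smul_zero g))) =
      g • c.repr.symm f := by
  induction f using Finsupp.induction_linear with
  | zero => simp
  | add f₁ f₂ ih₁ ih₂ =>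
    rw [Finsupp.mapRange_add (smul_add g), Finsupp.mapDomain_add, map_add, ih₁, ih₂,
      map_add, smul_add]
  | single i x =>
    rw [Finsupp.mapRange_single, Finsupp.mapDomain_single, repr_symm_single,
      repr_symm_single, compat, hc]

end Module.Basis

section Equivariant

variable {G A M : Type*} [Group G] [CommRing A] [MulSemiringAction G A]
  [AddCommGroup M] [Module A M] [DistribMulAction G M]

theorem isUnit_of_smul_basis_one_eq
    (compat : ∀ (g : G) (x : A) (m : M), g • (x • m) = (g • x) • (g • m))
    (b : Module.Basis G A M) {a : G → A} (hb : ∀ g : G, g • b 1 = a g • b g) (g : G) :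
    IsUnit (a g) := by
  have hb₁ : (g⁻¹ • a g) • (g⁻¹ • b g) = b 1 := by
    rw [← compat, ← hb, inv_smul_smul]
  simpa using (b.isUnit_of_smul_eq hb₁).map (MulSemiringAction.toRingHom G A g)

theorem exists_basis_smul_eq_mul
    (compat : ∀ (g : G) (x : A) (m : M), g • (x • m) = (g • x) • (g • m))
    (b : Module.Basis G A M) {a : G → A} (hb : ∀ g : G, g • b 1 = a g • b g) :
    ∃ c : Module.Basis G A M, ∀ g h : G, g • c h = c (g * h) := by
  let c := b.isUnitSMul (isUnit_of_smul_basis_one_eq compat b hb)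
  have hc : ∀ h, c h = h • b 1 := fun h => by
    rw [b.isUnitSMul_apply, hb]
  exact ⟨c, fun g h => by rw [hc, hc, smul_smul]⟩

end Equivariant

/-- In a `G`-equivariant `A`-module with an `A`-basis `b` indexed by `G` satisfying
`g • b 1 = a g • b g`, there is an `A`-basis `c` with `g • c h = c (g * h)`; moreover the
`A`-linear isomorphism `(G →₀ A) ≃ M` sending the standard basis vector at `h` to `c h`
intertwines the action `(g • f) h = g • f (g⁻¹ * h)` on `G →₀ A` with the action on `M`. -/
theorem stmt_4 (G : Type*) [Group G] (A : Type*) [CommRing A] [MulSemiringAction G A]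
    (M : Type*) [AddCommGroup M] [Module A M] [DistribMulAction G M]
    (compat : ∀ (g : G) (x : A) (m : M), g • (x • m) = (g • x) • (g • m))
    (b : Module.Basis G A M) (a : G → A)
    (hb : ∀ g : G, g • b (1 : G) = a g • b g) :
    ∃ c : Module.Basis G A M,
      (∀ g h : G, g • c h = c (g * h)) ∧
      (∀ (g : G) (f : G →₀ A),
        c.repr.symm
            (Finsupp.mapDomain (fun h : G => g * h)
              (f.mapRange (fun x : A => g • x) (smul_zero g))) =
          g • c.repr.symm f) := by
  obtain ⟨c, hc⟩ := exists_basis_smul_eq_mul compat b hb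
  exact ⟨c, hc, c.repr_symm_mapDomain_smul compat hc⟩
end
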